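/- There exist two connected simple graphs G and H on the vertex set Fin 5 that are not isomorphic and whose degree-distance matrices D^deg(G) = deg(G) − D(G) and D^deg(H) = deg(H) − D(H) have equal characteristic polynomials. -/

import Mathlib

open Matrix

noncomputable section

open scoped Classical

/-- Adjacency matrix of a simple graph on `Fin n`, over `ℤ`. -/
def adjMat {n : ℕ} (G : SimpleGraph (Fin n)) : Matrix (Fin n) (Fin n) ℤ :=
  Matrix.of fun u v => if G.Adj u v then 1 else 0

/-- Degree matrix: diagonal matrix of vertex degrees. -/
def degMat {n : ℕ} (G : SimpleGraph (Fin n)) : Matrix (Fin n) (Fin n) ℤ :=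
  Matrix.diagonal fun v => ∑ u, if G.Adj v u then (1 : ℤ) else 0

/-- Laplacian matrix `L(G) = deg(G) - A(G)`. -/
def lapMat {n : ℕ} (G : SimpleGraph (Fin n)) : Matrix (Fin n) (Fin n) ℤ :=
  degMat G - adjMat G

/-- Distance matrix: `(u,v)`-entry is the graph distance between `u` and `v`. -/
def distMat {n : ℕ} (G : SimpleGraph (Fin n)) : Matrix (Fin n) (Fin n) ℤ :=
  Matrix.of fun u v => (G.dist u v : ℤ)

/-- Transmission matrix: diagonal matrix of vertex transmissions. -/
def trMat {n : ℕ} (G : SimpleGraph (Fin n)) : Matrix (Fin n) (Fin n) ℤ :=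
  Matrix.diagonal fun u => ∑ v, (G.dist u v : ℤ)

/-- Distance Laplacian matrix `D^L(G) = tr(G) - D(G)`. -/
def distLap {n : ℕ} (G : SimpleGraph (Fin n)) : Matrix (Fin n) (Fin n) ℤ :=
  trMat G - distMat G

/-- Walk-type matrix of `M`: the `j`-th column is `M^j · e`, `e` the all-ones vector. -/
def walkMat {n : ℕ} (M : Matrix (Fin n) (Fin n) ℤ) : Matrix (Fin n) (Fin n) ℤ :=
  Matrix.of fun i j => (M ^ (j : ℕ)).mulVec 1 i

/-- Two integer matrices are equivalent over `ℤ` if `N = P·M·Q` with `P, Q ∈ GL_n(ℤ)`. -/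
def ZEquiv {n : ℕ} (M N : Matrix (Fin n) (Fin n) ℤ) : Prop :=
  ∃ P Q : Matrix.GeneralLinearGroup (Fin n) ℤ,
    N = (P : Matrix (Fin n) (Fin n) ℤ) * M * (Q : Matrix (Fin n) (Fin n) ℤ)

/-! ### Auxiliary constructions -/

/-- Adjacency of the first graph: vertices 0 and 1 are adjacent to everything. -/
def gAdj : Fin 5 → Fin 5 → Bool
  | 0,1 => true | 1,0 => true
  | 0,2 => true | 2,0 => true
  | 0,3 => true | 3,0 => true
  | 0,4 => true | 4,0 => true
  | 1,2 => true | 2,1 => true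
  | 1,3 => true | 3,1 => true
  | 1,4 => true | 4,1 => true
  | _,_ => false

/-- Adjacency of the second graph. -/
def hAdj : Fin 5 → Fin 5 → Bool
  | 0,1 => true | 1,0 => true
  | 0,2 => true | 2,0 => true
  | 0,3 => true | 3,0 => true
  | 0,4 => true | 4,0 => true
  | 1,2 => true | 2,1 => true
  | 1,3 => true | 3,1 => true
  | 2,3 => true | 3,2 => true
  | _,_ => false

def Gg : SimpleGraph (Fin 5) := ⟨fun u v => gAdj u v = true,
  ⟨fun u v h => by fin_cases u <;> fin_cases v <;> simp_all [gAdj]⟩,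
  ⟨fun u h => by fin_cases u <;> simp_all [gAdj]⟩⟩

def Hg : SimpleGraph (Fin 5) := ⟨fun u v => hAdj u v = true,
  ⟨fun u v h => by fin_cases u <;> fin_cases v <;> simp_all [hAdj]⟩,
  ⟨fun u h => by fin_cases u <;> simp_all [hAdj]⟩⟩

instance : DecidableRel Gg.Adj := fun _ _ => instDecidableEqBool _ _
instance : DecidableRel Hg.Adj := fun _ _ => instDecidableEqBool _ _

lemma dist_two' {n : ℕ} {G : SimpleGraph (Fin n)} {u v w : Fin n}
    (huv : ¬ G.Adj u v) (hne : u ≠ v) (h1 : G.Adj u w) (h2 : G.Adj w v) :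
    G.dist u v = 2 := by
  have hle : G.dist u v ≤ 2 := by
    have := SimpleGraph.dist_le
      (SimpleGraph.Walk.cons h1 (SimpleGraph.Walk.cons h2 SimpleGraph.Walk.nil))
    simpa using this
  have h0 : G.dist u v ≠ 0 := by
    intro h
    rw [SimpleGraph.dist_eq_zero_iff_eq_or_not_reachable] at h
    rcases h with h|h
    · exact hne h
    · exact h (h1.reachable.trans h2.reachable)
  have hone : G.dist u v ≠ 1 := by
    intro h; exact huv (SimpleGraph.dist_eq_one_iff_adj.mp h)
  omega

lemma connected_of_hub {n : ℕ} {G : SimpleGraph (Fin (n+1))}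
    (h : ∀ w : Fin (n+1), w ≠ 0 → G.Adj 0 w) : G.Connected := by
  rw [SimpleGraph.connected_iff]
  refine ⟨fun u v => ?_, ⟨0⟩⟩
  rcases eq_or_ne u 0 with rfl|hu
  · rcases eq_or_ne v 0 with rfl|hv
    · exact SimpleGraph.Reachable.refl _
    · exact (h v hv).reachable
  · rcases eq_or_ne v 0 with rfl|hv
    · exact (h u hu).symm.reachable
    · exact ((h u hu).symm.reachable).trans (h v hv).reachable

lemma charpoly_conj_of_comm {n : ℕ} (A B R : Matrix (Fin n) (Fin n) ℤ)
    (h : A * R = R * B) (hR : R.det ≠ 0) : A.charpoly = B.charpoly := by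
  have key : charmatrix A * (Polynomial.C : ℤ →+* Polynomial ℤ).mapMatrix R
      = (Polynomial.C : ℤ →+* Polynomial ℤ).mapMatrix R * charmatrix B := by
    simp only [charmatrix, sub_mul, mul_sub]
    rw [← _root_.map_mul (Polynomial.C : ℤ →+* Polynomial ℤ).mapMatrix, h, _root_.map_mul]
    congr 1
    rw [scalar_commute]
    exact fun r => Commute.all _ _
  have hdet := congrArg Matrix.det key
  rw [Matrix.det_mul, Matrix.det_mul] at hdet
  have hRC : ((Polynomial.C : ℤ →+* Polynomial ℤ).mapMatrix R).det = Polynomial.C R.det :=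
    (RingHom.map_det _ _).symm
  rw [hRC] at hdet
  have hC : (Polynomial.C R.det : Polynomial ℤ) ≠ 0 := by simpa using hR
  rw [Matrix.charpoly, Matrix.charpoly]
  rw [mul_comm] at hdet
  exact mul_left_cancel₀ hC hdet

def MG : Matrix (Fin 5) (Fin 5) ℤ :=
  !![4,-1,-1,-1,-1; -1,4,-1,-1,-1; -1,-1,2,-2,-2; -1,-1,-2,2,-2; -1,-1,-2,-2,2]
def MH : Matrix (Fin 5) (Fin 5) ℤ :=
  !![4,-1,-1,-1,-1; -1,3,-1,-1,-2; -1,-1,3,-1,-2; -1,-1,-1,3,-2; -1,-2,-2,-2,1]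
def RR : Matrix (Fin 5) (Fin 5) ℤ :=
  !![7,-10,-12,-5,15; -21,4,2,9,1; 5,1,3,3,-3; 3,3,2,0,-1; 1,2,3,-2,1]

lemma distG : distMat Gg = !![0,1,1,1,1; 1,0,1,1,1; 1,1,0,2,2; 1,1,2,0,2; 1,1,2,2,0] := by
  ext u v
  fin_cases u <;> fin_cases v <;>
    simp only [distMat, Matrix.of_apply] <;>
    first
    | (rw [SimpleGraph.dist_self] ; norm_num)
    | (rw [SimpleGraph.dist_eq_one_iff_adj.mpr (by decide)] ; norm_num)
    | (rw [dist_two' (by decide) (by decide) (w := 0) (by decide) (by decide)] ; norm_num)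

lemma distH : distMat Hg = !![0,1,1,1,1; 1,0,1,1,2; 1,1,0,1,2; 1,1,1,0,2; 1,2,2,2,0] := by
  ext u v
  fin_cases u <;> fin_cases v <;>
    simp only [distMat, Matrix.of_apply] <;>
    first
    | (rw [SimpleGraph.dist_self] ; norm_num)
    | (rw [SimpleGraph.dist_eq_one_iff_adj.mpr (by decide)] ; norm_num)
    | (rw [dist_two' (by decide) (by decide) (w := 0) (by decide) (by decide)] ; norm_num)

lemma degG : degMat Gg = Matrix.diagonal ![4,4,2,2,2] := by
  have hf : (fun v : Fin 5 => ∑ u, @ite ℤ (Gg.Adj v u) (Classical.propDecidable _) 1 0)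
      = ![4,4,2,2,2] := by
    funext v
    fin_cases v <;> rw [Fin.sum_univ_five] <;>
      simp (config := { decide := true }) only []
  rw [degMat, hf]

lemma degH : degMat Hg = Matrix.diagonal ![4,3,3,3,1] := by
  have hf : (fun v : Fin 5 => ∑ u, @ite ℤ (Hg.Adj v u) (Classical.propDecidable _) 1 0)
      = ![4,3,3,3,1] := by
    funext v
    fin_cases v <;> rw [Fin.sum_univ_five] <;>
      simp (config := { decide := true }) only []
  rw [degMat, hf]

lemma matG : degMat Gg - distMat Gg = MG := by
  rw [degG, distG]
  ext i j
  fin_cases i <;> fin_cases j <;> (try norm_num [MG, Matrix.diagonal]) <;> decide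

lemma matH : degMat Hg - distMat Hg = MH := by
  rw [degH, distH]
  ext i j
  fin_cases i <;> fin_cases j <;> (try norm_num [MH, Matrix.diagonal]) <;> decide

set_option maxRecDepth 20000 in
lemma charMGMH : MG.charpoly = MH.charpoly := by
  apply charpoly_conj_of_comm MG MH RR
  · decide
  · have : RR.det = -14000 := by decide
    rw [this]; norm_num

theorem stmt9 :
    ∃ G H : SimpleGraph (Fin 5), G.Connected ∧ H.Connected ∧
      ¬ Nonempty (G ≃g H) ∧
      (degMat G - distMat G).charpoly = (degMat H - distMat H).charpoly := by
  refine ⟨Gg, Hg, connected_of_hub (by decide), connected_of_hub (by decide), ?_, ?_⟩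
  · rintro ⟨f⟩
    have h4 : ∀ x, Hg.Adj 4 x → x = 0 := by decide
    have hmin : ∀ v : Fin 5, ∃ a b : Fin 5, a ≠ b ∧ Gg.Adj v a ∧ Gg.Adj v b := by decide
    obtain ⟨a, b, hab, h1, h2⟩ := hmin (f.symm 4)
    have e1 : Hg.Adj 4 (f a) := by
      have := f.map_adj_iff.mpr h1
      rwa [f.apply_symm_apply] at this
    have e2 : Hg.Adj 4 (f b) := by
      have := f.map_adj_iff.mpr h2
      rwa [f.apply_symm_apply] at this
    exact hab (f.injective ((h4 _ e1).trans (h4 _ e2).symm))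
  · rw [matG, matH]
    exact charMGMH

end
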